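/- arXiv:2111.00118 — 3 statements merged into one kernel-verified Lean document; each statement's English description precedes it below -/
import Mathlib

section
/- Let a_0 ≥ a_1 ≥ ⋯ ≥ a_N ≥ 0 = a_{N+1} be a finite nonincreasing sequence of nonnegative reals, let μ be a permutation of {0, 1, …, N+1}, and let p > 1. Then Σ_{j=0}^{N} |a_{μ(j+1)} - a_{μ(j)}|^p ≥ Σ_{j=0}^{N} |a_{j+1} - a_j|^p. -/
open Finset

/-- Two-term superadditivity of `x ↦ x ^ p` on nonnegative reals, `1 ≤ p`. -/
lemma my_add_rpow {p : ℝ} (hp : 1 ≤ p) {x y : ℝ} (hx : 0 ≤ x) (hy : 0 ≤ y) :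
    x ^ p + y ^ p ≤ (x + y) ^ p := by
  have h := NNReal.add_rpow_le_rpow_add (⟨x, hx⟩ : NNReal) ⟨y, hy⟩ hp
  exact_mod_cast h

/-- Superadditivity of `x ↦ x ^ p` over finite sums. -/
lemma my_sum_rpow {ι : Type*} {p : ℝ} (hp : 1 ≤ p) (s : Finset ι) (f : ι → ℝ)
    (hf : ∀ i ∈ s, 0 ≤ f i) : ∑ i ∈ s, f i ^ p ≤ (∑ i ∈ s, f i) ^ p := by
  induction s using Finset.cons_induction with
  | empty => simp [Real.zero_rpow (by linarith : p ≠ 0)]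
  | cons a s ha ih =>
    rw [Finset.sum_cons, Finset.sum_cons]
    have h1 : ∀ i ∈ s, 0 ≤ f i := fun i hi => hf i (Finset.mem_cons_of_mem hi)
    have h2 : 0 ≤ ∑ i ∈ s, f i := Finset.sum_nonneg h1
    calc f a ^ p + ∑ i ∈ s, f i ^ p ≤ f a ^ p + (∑ i ∈ s, f i) ^ p := by
          linarith [ih h1]
      _ ≤ (f a + ∑ i ∈ s, f i) ^ p :=
          my_add_rpow hp (hf a (Finset.mem_cons_self a s)) h2

/-- If adjacent values of `P` agree everywhere, `P` is constant. -/
lemma my_const_of_adj {n : ℕ} (P : Fin (n + 2) → Prop)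
    (h : ∀ k : Fin (n + 1), P k.castSucc ↔ P k.succ) : ∀ i, P i ↔ P 0 := by
  intro i
  induction i using Fin.induction with
  | zero => rfl
  | succ k ih => rw [← h k]; exact ih

/-- `myCross s t j` : the step from `s` to `t` crosses the gap between `j` and `j+1`. -/
def myCross {N : ℕ} (s t : Fin (N + 2)) (j : Fin (N + 1)) : Prop :=
  (s ≤ j.castSucc ∧ j.succ ≤ t) ∨ (t ≤ j.castSucc ∧ j.succ ≤ s)

instance {N : ℕ} (s t : Fin (N + 2)) (j : Fin (N + 1)) : Decidable (myCross s t j) := by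
  unfold myCross; infer_instance

/-- Telescoping: the decrease from `a s` to `a t` is the sum of the crossed gaps. -/
lemma my_tele {N : ℕ} (a : Fin (N + 2) → ℝ) {s t : Fin (N + 2)} (hst : s ≤ t) :
    a s - a t = ∑ j : Fin (N + 1),
      if s ≤ j.castSucc ∧ j.succ ≤ t then a j.castSucc - a j.succ else 0 := by
  set A : ℕ → ℝ := fun n => if h : n < N + 2 then a ⟨n, h⟩ else 0 with hA
  have hAs : A s.val = a s := by simp [hA, s.isLt]
  have hAt : A t.val = a t := by simp [hA, t.isLt]
  have key : ∀ j : Fin (N + 1),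
      (if s ≤ j.castSucc ∧ j.succ ≤ t then a j.castSucc - a j.succ else 0) =
      (fun n : ℕ => if s.val ≤ n ∧ n + 1 ≤ t.val then A n - A (n + 1) else 0) j.val := by
    intro j
    have hj1 : (j : ℕ) < N + 2 := by omega
    have hj2 : (j : ℕ) + 1 < N + 2 := by omega
    have h1 : a j.castSucc = A j.val := by
      simp only [hA, dif_pos hj1]
      congr 1
    have h2 : a j.succ = A (j.val + 1) := by
      simp only [hA, dif_pos hj2]
      congr 1
    simp only [Fin.le_def, Fin.coe_castSucc, Fin.val_succ, h1, h2]
  rw [Finset.sum_congr rfl (fun j _ => key j),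
    Fin.sum_univ_eq_sum_range (fun n : ℕ =>
      if s.val ≤ n ∧ n + 1 ≤ t.val then A n - A (n + 1) else 0) (N + 1),
    ← Finset.sum_filter]
  have hfilter : (Finset.range (N + 1)).filter (fun n => s.val ≤ n ∧ n + 1 ≤ t.val) =
      Finset.Ico s.val t.val := by
    ext n
    simp only [Finset.mem_filter, Finset.mem_range, Finset.mem_Ico]
    have := t.isLt
    omega
  rw [hfilter]
  have hneg : ∑ n ∈ Finset.Ico s.val t.val, (A n - A (n + 1)) =
      -(∑ n ∈ Finset.Ico s.val t.val, (A (n + 1) - A n)) := by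
    rw [← Finset.sum_neg_distrib]; apply Finset.sum_congr rfl; intro n _; ring
  rw [hneg, Finset.sum_Ico_eq_sub (fun n => A (n + 1) - A n) (show s.val ≤ t.val from hst),
    Finset.sum_range_sub A, Finset.sum_range_sub A, hAs, hAt]
  ring

/-- If `a_0 ≥ a_1 ≥ ⋯ ≥ a_N ≥ 0 = a_{N+1}` and `μ` is a permutation of
`{0,…,N+1}`, then for every real `p > 1`,
`∑_{j=0}^N |a_{μ(j+1)} - a_{μ(j)}|^p ≥ ∑_{j=0}^N |a_{j+1} - a_j|^p`. -/
theorem rearrangement_increases_p_variation (N : ℕ) (a : Fin (N + 2) → ℝ)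
    (ha : Antitone a) (hlast : a (Fin.last (N + 1)) = 0)
    (μ : Equiv.Perm (Fin (N + 2))) (p : ℝ) (hp : 1 < p) :
    ∑ j : Fin (N + 1), |a (μ j.succ) - a (μ j.castSucc)| ^ p ≥
      ∑ j : Fin (N + 1), |a j.succ - a j.castSucc| ^ p := by
  have hp1 : 1 ≤ p := hp.le
  have hp0 : p ≠ 0 := by linarith
  set g : Fin (N + 1) → ℝ := fun j => a j.castSucc - a j.succ with hgdef
  have hg0 : ∀ j, 0 ≤ g j := fun j =>
    sub_nonneg.2 (ha (show j.castSucc < j.succ from Fin.castSucc_lt_succ).le)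
  -- The crossing decomposition of a step
  have hstep : ∀ s t : Fin (N + 2), |a t - a s| =
      ∑ j : Fin (N + 1), if myCross s t j then g j else 0 := by
    intro s t
    rcases le_total s t with hst | hts
    · have heq : ∀ j : Fin (N + 1), (if myCross s t j then g j else 0) =
          (if s ≤ j.castSucc ∧ j.succ ≤ t then a j.castSucc - a j.succ else 0) := by
        intro j
        have hcs : j.castSucc < j.succ := Fin.castSucc_lt_succ
        by_cases h : s ≤ j.castSucc ∧ j.succ ≤ t
        · have hc : myCross s t j := Or.inl h
          rw [if_pos hc, if_pos h]
        · have hc : ¬ myCross s t j := by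
            rintro (h' | ⟨h1, h2⟩)
            · exact h h'
            · exact absurd ((h1.trans_lt hcs).trans_le h2) (not_lt.2 hst)
          rw [if_neg hc, if_neg h]
      rw [Finset.sum_congr rfl (fun j _ => heq j), ← my_tele a hst,
        abs_sub_comm, abs_of_nonneg (sub_nonneg.2 (ha hst))]
    · have heq : ∀ j : Fin (N + 1), (if myCross s t j then g j else 0) =
          (if t ≤ j.castSucc ∧ j.succ ≤ s then a j.castSucc - a j.succ else 0) := by
        intro j
        have hcs : j.castSucc < j.succ := Fin.castSucc_lt_succ
        by_cases h : t ≤ j.castSucc ∧ j.succ ≤ s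
        · have hc : myCross s t j := Or.inr h
          rw [if_pos hc, if_pos h]
        · have hc : ¬ myCross s t j := by
            rintro (⟨h1, h2⟩ | h')
            · exact absurd ((h1.trans_lt hcs).trans_le h2) (not_lt.2 hts)
            · exact h h'
          rw [if_neg hc, if_neg h]
      rw [Finset.sum_congr rfl (fun j _ => heq j), ← my_tele a hts,
        abs_of_nonneg (sub_nonneg.2 (ha hts))]
  -- Every gap is crossed by some step of the permuted path
  have hcrossed : ∀ j : Fin (N + 1), ∃ k : Fin (N + 1),
      myCross (μ k.castSucc) (μ k.succ) j := by
    intro j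
    set P : Fin (N + 2) → Prop := fun k => μ k ≤ j.castSucc with hP
    have hP0 : P (μ.symm 0) := by
      simp only [hP, Equiv.apply_symm_apply]; exact Fin.zero_le _
    have hPlast : ¬ P (μ.symm (Fin.last (N + 1))) := by
      simp only [hP, Equiv.apply_symm_apply, Fin.le_def, Fin.val_last, Fin.coe_castSucc]
      omega
    by_contra hcon
    push_neg at hcon
    have hadj : ∀ k : Fin (N + 1), P k.castSucc ↔ P k.succ := by
      intro k
      have h := hcon k
      unfold myCross at h
      push_neg at h
      obtain ⟨h1, h2⟩ := h
      constructor
      · intro hk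
        by_contra hk'
        have h3 := h1 hk
        simp only [hP, Fin.le_def, Fin.lt_def, Fin.coe_castSucc, Fin.val_succ,
          not_le] at hk hk' h3
        omega
      · intro hk
        by_contra hk'
        have h3 := h2 hk
        simp only [hP, Fin.le_def, Fin.lt_def, Fin.coe_castSucc, Fin.val_succ,
          not_le] at hk hk' h3
        omega
    have hconst := my_const_of_adj P hadj
    rw [hconst (μ.symm 0)] at hP0
    rw [hconst (μ.symm (Fin.last (N + 1)))] at hPlast
    exact hPlast hP0
  -- RHS equals the sum of gap powers
  have hrhs : ∑ j : Fin (N + 1), |a j.succ - a j.castSucc| ^ p =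
      ∑ j : Fin (N + 1), g j ^ p := by
    apply Finset.sum_congr rfl
    intro j _
    rw [abs_sub_comm, abs_of_nonneg (hg0 j)]
  rw [hrhs, ge_iff_le]
  -- Lower bound each step's power by the sum of crossed gap powers
  have hstep2 : ∀ k : Fin (N + 1),
      (∑ j : Fin (N + 1), if myCross (μ k.castSucc) (μ k.succ) j then g j ^ p else 0) ≤
      |a (μ k.succ) - a (μ k.castSucc)| ^ p := by
    intro k
    rw [hstep (μ k.castSucc) (μ k.succ)]
    have heq : ∀ j : Fin (N + 1),
        (if myCross (μ k.castSucc) (μ k.succ) j then g j ^ p else 0) =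
        (if myCross (μ k.castSucc) (μ k.succ) j then g j else 0) ^ p := by
      intro j
      by_cases h : myCross (μ k.castSucc) (μ k.succ) j
      · rw [if_pos h, if_pos h]
      · rw [if_neg h, if_neg h, Real.zero_rpow hp0]
    rw [Finset.sum_congr rfl (fun j _ => heq j)]
    refine my_sum_rpow hp1 _ _ (fun j _ => ?_)
    split_ifs with h
    · exact hg0 j
    · exact le_rfl
  calc ∑ j : Fin (N + 1), g j ^ p
      ≤ ∑ j : Fin (N + 1), ∑ k : Fin (N + 1),
          (if myCross (μ k.castSucc) (μ k.succ) j then g j ^ p else 0) := by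
        apply Finset.sum_le_sum
        intro j _
        obtain ⟨k₀, hk₀⟩ := hcrossed j
        have h1 : g j ^ p =
            (if myCross (μ k₀.castSucc) (μ k₀.succ) j then g j ^ p else 0) := by
          rw [if_pos hk₀]
        refine h1.le.trans (Finset.single_le_sum (f := fun k =>
          (if myCross (μ k.castSucc) (μ k.succ) j then g j ^ p else 0))
          (fun i _ => ?_) (Finset.mem_univ k₀))
        split_ifs with h
        · exact Real.rpow_nonneg (hg0 j) p
        · exact le_rfl
    _ = ∑ k : Fin (N + 1), ∑ j : Fin (N + 1),
          (if myCross (μ k.castSucc) (μ k.succ) j then g j ^ p else 0) :=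
        Finset.sum_comm
    _ ≤ ∑ k : Fin (N + 1), |a (μ k.succ) - a (μ k.castSucc)| ^ p :=
        Finset.sum_le_sum (fun k _ => hstep2 k)
end

section
/- Let d ≥ 1, 0 < σ < 2/d, and λ > 0. Then h(λ) := inf{ H[u] : u ∈ l²(ℤ^d), Σ_n |u_n|² = λ } < 0, where H[u] = Σ_{n,j:|j-n|=1} |u_j - u_n|² - (1/(σ+1)) Σ_n |u_n|^{2σ+2}. -/
/-- The nearest-neighbor (edge) sum `∑_{n}∑_{j:|j-n|=1} |u_j - u_n|² = ⟨-Δ_disc u, u⟩`. -/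
noncomputable def edgeSum (d : ℕ) (u : (Fin d → ℤ) → ℂ) : ℝ :=
  ∑' n : Fin d → ℤ, ∑ i : Fin d,
    (‖u (n + Pi.single i 1) - u n‖ ^ 2 + ‖u (n - Pi.single i 1) - u n‖ ^ 2)

/-- The DNLS Hamiltonian `H[u] = ∑_{n,j:|j-n|=1}|u_j-u_n|² - (1/(σ+1)) ∑_n |u_n|^{2σ+2}`. -/
noncomputable def dnlsH (d : ℕ) (σ : ℝ) (u : (Fin d → ℤ) → ℂ) : ℝ :=
  edgeSum d u - (1 / (σ + 1)) * ∑' n : Fin d → ℤ, ‖u n‖ ^ (2 * σ + 2)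

/-- `h(λ) = inf { H[u] : u ∈ l²(ℤ^d), ∑_n |u_n|² = λ }`. -/
noncomputable def hInf (d : ℕ) (σ : ℝ) (lam : ℝ) : ℝ :=
  sInf {x : ℝ | ∃ u : (Fin d → ℤ) → ℂ, Summable (fun n => ‖u n‖ ^ 2) ∧
    (∑' n : Fin d → ℤ, ‖u n‖ ^ 2) = lam ∧ x = dnlsH d σ u}

set_option maxHeartbeats 1000000

noncomputable def geoZ (s : ℝ) : ℝ := (1 - s)⁻¹ + s * (1 - s)⁻¹
noncomputable def kinV (r : ℝ) : ℝ := (1 - r) ^ 2 * (1 - r ^ 2)⁻¹ + (1 - r) ^ 2 * (1 - r ^ 2)⁻¹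
noncomputable def testFun (d : ℕ) (r c : ℝ) : (Fin d → ℤ) → ℂ :=
  fun n => ((c * ∏ j, r ^ (n j).natAbs : ℝ) : ℂ)

lemma hasSum_geoZ {s : ℝ} (h0 : 0 ≤ s) (h1 : s < 1) :
    HasSum (fun k : ℤ => s ^ k.natAbs) (geoZ s) := by
  apply HasSum.of_nat_of_neg_add_one
  · simpa using hasSum_geometric_of_lt_one h0 h1
  · have h := (hasSum_geometric_of_lt_one h0 h1).mul_left s
    convert h using 2 with n
    case e'_3 => rfl
    have : ((-(↑n + 1) : ℤ)).natAbs = n + 1 := by omega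
    rw [this, pow_succ]
    ring

lemma hasSum_kin {r : ℝ} (h0 : 0 ≤ r) (h1 : r < 1) :
    HasSum (fun k : ℤ => (r ^ (k + 1).natAbs - r ^ k.natAbs) ^ 2) (kinV r) := by
  have hs0 : (0:ℝ) ≤ r ^ 2 := by positivity
  have hs1 : r ^ 2 < 1 := by nlinarith
  have hgeo := (hasSum_geometric_of_lt_one hs0 hs1).mul_left ((1 - r) ^ 2)
  have key : ∀ n : ℕ, (r ^ (n + 1) - r ^ n) ^ 2 = (1 - r) ^ 2 * (r ^ 2) ^ n := by
    intro n
    have h2 : (r ^ 2) ^ n = (r ^ n) ^ 2 := by rw [← pow_mul, ← pow_mul, mul_comm]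
    rw [h2, pow_succ]
    ring
  apply HasSum.of_nat_of_neg_add_one
  · convert hgeo using 2 with n
    case e'_3 => rfl
    have e1 : ((↑n + 1 : ℤ)).natAbs = n + 1 := by omega
    have e2 : ((↑n : ℤ)).natAbs = n := by omega
    rw [e1, e2, key]
  · convert hgeo using 2 with n
    case e'_3 => rfl
    have e1 : ((-(↑n + 1) + 1 : ℤ)).natAbs = n := by omega
    have e2 : ((-(↑n + 1) : ℤ)).natAbs = n + 1 := by omega
    rw [e1, e2, ← key n]
    ring

lemma hasSum_pi_prod : ∀ (d : ℕ) (g : Fin d → ℤ → ℝ) (S : Fin d → ℝ),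
    (∀ i k, 0 ≤ g i k) → (∀ i, HasSum (g i) (S i)) →
    HasSum (fun n : Fin d → ℤ => ∏ i, g i (n i)) (∏ i, S i) := by
  intro d
  induction d with
  | zero =>
    intro g S _ _
    have h : (fun n : Fin 0 → ℤ => ∏ i, g i (n i)) = fun _ => (1 : ℝ) := by
      funext n; simp
    rw [h]
    simpa using hasSum_single (f := fun _ : Fin 0 → ℤ => (1:ℝ)) default
      (fun b hb => absurd (Subsingleton.elim b default) hb)
  | succ d ih =>
    intro g S h0 hg
    have h1 : HasSum (g 0) (S 0) := hg 0
    have h2 : HasSum (fun m : Fin d → ℤ => ∏ i, g (Fin.succ i) (m i)) (∏ i, S (Fin.succ i)) :=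
      ih (fun i => g (Fin.succ i)) (fun i => S (Fin.succ i)) (fun i k => h0 (Fin.succ i) k)
        (fun i => hg (Fin.succ i))
    have hsummable : Summable (fun p : ℤ × (Fin d → ℤ) => g 0 p.1 * ∏ i, g (Fin.succ i) (p.2 i)) :=
      Summable.mul_of_nonneg (f := g 0) (g := fun m : Fin d → ℤ => ∏ i, g (Fin.succ i) (m i))
        h1.summable h2.summable (fun k => h0 0 k)
        (fun m => Finset.prod_nonneg (fun i _ => h0 (Fin.succ i) (m i)))
    have hprod : HasSum (fun p : ℤ × (Fin d → ℤ) => g 0 p.1 * ∏ i, g (Fin.succ i) (p.2 i))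
        (S 0 * ∏ i, S (Fin.succ i)) :=
      HasSum.mul (f := g 0) (g := fun m : Fin d → ℤ => ∏ i, g (Fin.succ i) (m i))
        h1 h2 hsummable
    refine ((Fin.consEquiv (fun _ : Fin (d+1) => ℤ)).hasSum_iff).mp ?_
    have heq : ((fun n : Fin (d+1) → ℤ => ∏ i, g i (n i)) ∘ (Fin.consEquiv fun _ : Fin (d+1) => ℤ))
        = fun p : ℤ × (Fin d → ℤ) => g 0 p.1 * ∏ i, g (Fin.succ i) (p.2 i) := by
      funext p
      simp [Fin.consEquiv, Fin.prod_univ_succ]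
    rw [heq, Fin.prod_univ_succ]
    exact hprod

lemma pow_rpow_comm {x : ℝ} (hx : 0 ≤ x) (m : ℕ) (p : ℝ) : (x ^ m) ^ p = (x ^ p) ^ m := by
  rw [← Real.rpow_natCast x m, ← Real.rpow_natCast (x ^ p) m, ← Real.rpow_mul hx,
    ← Real.rpow_mul hx, mul_comm]

lemma testFun_norm {d : ℕ} {r c : ℝ} (hr : 0 ≤ r) (hc : 0 ≤ c) (n : Fin d → ℤ) :
    ‖testFun d r c n‖ = c * ∏ j, r ^ (n j).natAbs := by
  rw [testFun, Complex.norm_real, Real.norm_eq_abs, abs_of_nonneg]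
  positivity

lemma mass_hasSum (d : ℕ) {r c : ℝ} (hr0 : 0 ≤ r) (hr1 : r < 1) (hc : 0 ≤ c) :
    HasSum (fun n : Fin d → ℤ => ‖testFun d r c n‖ ^ 2) (c ^ 2 * geoZ (r ^ 2) ^ d) := by
  have hs0 : (0:ℝ) ≤ r ^ 2 := by positivity
  have hs1 : r ^ 2 < 1 := by nlinarith
  have hpi := hasSum_pi_prod d (fun _ k => (r ^ 2) ^ k.natAbs) (fun _ => geoZ (r ^ 2))
    (fun _ k => by positivity) (fun _ => hasSum_geoZ hs0 hs1)
  have h := hpi.mul_left (c ^ 2)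
  rw [Finset.prod_const, Finset.card_univ, Fintype.card_fin] at h
  convert h using 1
  case e'_3 => rfl
  funext n
  rw [testFun_norm hr0 hc, mul_pow, ← Finset.prod_pow]
  congr 1
  exact Finset.prod_congr rfl (fun j _ => by
    show (r ^ (n j).natAbs) ^ 2 = (r ^ 2) ^ (n j).natAbs
    rw [← pow_mul, pow_mul'])

lemma nl_hasSum (d : ℕ) {r c : ℝ} (p : ℝ) (hr0 : 0 ≤ r) (hr1 : r < 1) (hc : 0 ≤ c)
    (hp : 0 < p) :
    HasSum (fun n : Fin d → ℤ => ‖testFun d r c n‖ ^ p) (c ^ p * geoZ (r ^ p) ^ d) := by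
  have ht0 : (0:ℝ) ≤ r ^ p := Real.rpow_nonneg hr0 p
  have ht1 : r ^ p < 1 := Real.rpow_lt_one hr0 hr1 hp
  have hpi := hasSum_pi_prod d (fun _ k => (r ^ p) ^ k.natAbs) (fun _ => geoZ (r ^ p))
    (fun _ k => by positivity) (fun _ => hasSum_geoZ ht0 ht1)
  have h := hpi.mul_left (c ^ p)
  rw [Finset.prod_const, Finset.card_univ, Fintype.card_fin] at h
  convert h using 1
  case e'_3 => rfl
  funext n
  rw [testFun_norm hr0 hc, Real.mul_rpow hc (by positivity),
    ← Real.finset_prod_rpow _ _ (fun j _ => by positivity)]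
  congr 1
  exact Finset.prod_congr rfl (fun j _ => by
    show (r ^ (n j).natAbs) ^ p = (r ^ p) ^ (n j).natAbs
    rw [pow_rpow_comm hr0])

lemma edge_plus_hasSum (d : ℕ) {r c : ℝ} (hr0 : 0 ≤ r) (hr1 : r < 1) (hc : 0 ≤ c) (i : Fin d) :
    HasSum (fun n : Fin d → ℤ =>
        ‖testFun d r c (n + Pi.single i 1) - testFun d r c n‖ ^ 2)
      (c ^ 2 * (kinV r * geoZ (r ^ 2) ^ (d - 1))) := by
  classical
  have hs0 : (0:ℝ) ≤ r ^ 2 := by positivity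
  have hs1 : r ^ 2 < 1 := by nlinarith
  set G : Fin d → ℤ → ℝ := fun j k =>
    if j = i then (r ^ (k + 1).natAbs - r ^ k.natAbs) ^ 2 else (r ^ 2) ^ k.natAbs with hG
  set V : Fin d → ℝ := fun j => if j = i then kinV r else geoZ (r ^ 2) with hV
  have hpi := hasSum_pi_prod d G V
    (fun j k => by by_cases h : j = i <;> simp only [hG, h, if_true, if_false] <;> positivity)
    (fun j => by
      by_cases h : j = i
      · simp only [hG, hV, h, if_true]
        exact hasSum_kin hr0 hr1
      · simp only [hG, hV, h, if_false]
        exact hasSum_geoZ hs0 hs1)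
  have hVprod : ∏ j, V j = kinV r * geoZ (r ^ 2) ^ (d - 1) := by
    rw [← Finset.mul_prod_erase Finset.univ V (Finset.mem_univ i)]
    congr 1
    · simp [hV]
    · rw [Finset.prod_congr rfl (fun j hj => show V j = geoZ (r ^ 2) by
        simp [hV, Finset.ne_of_mem_erase hj]), Finset.prod_const,
        Finset.card_erase_of_mem (Finset.mem_univ i), Finset.card_univ, Fintype.card_fin]
  have h := hpi.mul_left (c ^ 2)
  rw [hVprod] at h
  convert h using 1
  case e'_3 => rfl
  funext n
  have hni : (n + Pi.single i 1 : Fin d → ℤ) i = n i + 1 := by simp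
  have hnj : ∀ j ∈ Finset.univ.erase i, (n + Pi.single i 1 : Fin d → ℤ) j = n j := by
    intro j hj
    simp [Pi.single_eq_of_ne (Finset.ne_of_mem_erase hj)]
  have hsub : testFun d r c (n + Pi.single i 1) - testFun d r c n
      = ((c * ∏ j, r ^ ((n + Pi.single i 1 : Fin d → ℤ) j).natAbs
          - c * ∏ j, r ^ (n j).natAbs : ℝ) : ℂ) := by
    simp [testFun]
  rw [hsub, Complex.norm_real, Real.norm_eq_abs, sq_abs]
  have h1 : ∏ j, r ^ ((n + Pi.single i 1 : Fin d → ℤ) j).natAbs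
      = r ^ (n i + 1).natAbs * ∏ j ∈ Finset.univ.erase i, r ^ (n j).natAbs := by
    rw [← Finset.mul_prod_erase Finset.univ _ (Finset.mem_univ i), hni]
    congr 1
    exact Finset.prod_congr rfl (fun j hj => by rw [hnj j hj])
  have h2 : ∏ j, r ^ (n j).natAbs
      = r ^ (n i).natAbs * ∏ j ∈ Finset.univ.erase i, r ^ (n j).natAbs := by
    rw [← Finset.mul_prod_erase Finset.univ _ (Finset.mem_univ i)]
  have h3 : ∏ j, G j (n j) = (r ^ (n i + 1).natAbs - r ^ (n i).natAbs) ^ 2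
      * (∏ j ∈ Finset.univ.erase i, r ^ (n j).natAbs) ^ 2 := by
    rw [← Finset.mul_prod_erase Finset.univ _ (Finset.mem_univ i)]
    congr 1
    · simp [hG]
    · rw [← Finset.prod_pow]
      exact Finset.prod_congr rfl (fun j hj => by
        simp only [hG, if_neg (Finset.ne_of_mem_erase hj)]
        rw [← pow_mul, pow_mul'])
  rw [h1, h2, h3]
  ring

lemma edge_minus_hasSum (d : ℕ) {r c : ℝ} (hr0 : 0 ≤ r) (hr1 : r < 1) (hc : 0 ≤ c) (i : Fin d) :
    HasSum (fun n : Fin d → ℤ =>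
        ‖testFun d r c (n - Pi.single i 1) - testFun d r c n‖ ^ 2)
      (c ^ 2 * (kinV r * geoZ (r ^ 2) ^ (d - 1))) := by
  have h := edge_plus_hasSum d hr0 hr1 hc i
  rw [← Equiv.hasSum_iff (Equiv.addRight (Pi.single i 1 : Fin d → ℤ))]
  convert h using 1
  funext n
  simp only [Function.comp_apply, Equiv.coe_addRight, add_sub_cancel_right]
  rw [norm_sub_rev]

lemma edgeSum_testFun (d : ℕ) {r c : ℝ} (hr0 : 0 ≤ r) (hr1 : r < 1) (hc : 0 ≤ c) :
    edgeSum d (testFun d r c)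
      = d * (2 * (c ^ 2 * (kinV r * geoZ (r ^ 2) ^ (d - 1)))) := by
  have h : HasSum (fun n : Fin d → ℤ => ∑ i : Fin d,
      (‖testFun d r c (n + Pi.single i 1) - testFun d r c n‖ ^ 2
        + ‖testFun d r c (n - Pi.single i 1) - testFun d r c n‖ ^ 2))
      (∑ _i : Fin d, (c ^ 2 * (kinV r * geoZ (r ^ 2) ^ (d - 1))
        + c ^ 2 * (kinV r * geoZ (r ^ 2) ^ (d - 1)))) :=
    hasSum_sum (fun i _ => (edge_plus_hasSum d hr0 hr1 hc i).add (edge_minus_hasSum d hr0 hr1 hc i))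
  rw [edgeSum, h.tsum_eq, Finset.sum_const, Finset.card_univ, Fintype.card_fin, nsmul_eq_mul]
  ring

lemma le_geoZ {s : ℝ} (h0 : 0 ≤ s) (h1 : s < 1) : (1 - s)⁻¹ ≤ geoZ s :=
  le_add_of_nonneg_right (by
    have : (0:ℝ) ≤ (1 - s)⁻¹ := inv_nonneg.mpr (by linarith)
    positivity)

lemma geoZ_le {s : ℝ} (h0 : 0 ≤ s) (h1 : s < 1) : geoZ s ≤ 2 * (1 - s)⁻¹ := by
  have hpos : (0:ℝ) ≤ (1 - s)⁻¹ := inv_nonneg.mpr (by linarith)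
  have : s * (1 - s)⁻¹ ≤ 1 * (1 - s)⁻¹ := mul_le_mul_of_nonneg_right (by linarith) hpos
  rw [geoZ]; linarith

lemma one_le_geoZ {s : ℝ} (h0 : 0 ≤ s) (h1 : s < 1) : 1 ≤ geoZ s := by
  have hx : (0:ℝ) < 1 - s := by linarith
  have h2 : (1:ℝ) ≤ (1 - s)⁻¹ := by
    nlinarith [inv_pos.mpr hx, inv_mul_cancel₀ hx.ne']
  exact le_trans h2 (le_geoZ h0 h1)

/-- for `d ≥ 1`, `0 < σ < 2/d` and `λ > 0`, `h(λ) < 0`. -/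
theorem hInf_neg (d : ℕ) (hd : 1 ≤ d) (σ : ℝ) (hσ0 : 0 < σ) (hσ : σ < 2 / d)
    (lam : ℝ) (hlam : 0 < lam) : hInf d σ lam < 0 := by
  have hdR : (1:ℝ) ≤ (d:ℝ) := by exact_mod_cast hd
  have hdpos : (0:ℝ) < (d:ℝ) := by linarith
  have hσd : σ * (d:ℝ) < 2 := (lt_div_iff₀ hdpos).mp hσ
  have hσ1 : (0:ℝ) < σ + 1 := by linarith
  set β : ℝ := 2 - σ * (d:ℝ) with hβdef
  have hβ : 0 < β := by rw [hβdef]; linarith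
  set C : ℝ := (1 / (σ + 1)) * lam ^ (σ + 1) / (((2:ℝ) ^ d) ^ (σ + 1) * (2 * σ + 2) ^ d)
    with hCdef
  have hC : 0 < C := by
    apply div_pos
    · exact mul_pos (by positivity) (Real.rpow_pos_of_pos hlam _)
    · exact mul_pos (Real.rpow_pos_of_pos (by positivity) _) (by positivity)
  set K : ℝ := C / (4 * (d:ℝ) * lam) with hKdef
  have hK : 0 < K := div_pos hC (by positivity)
  set ε : ℝ := min 2⁻¹ (K ^ β⁻¹ / 2) with hεdef
  have hε0 : 0 < ε := lt_min (by norm_num) (half_pos (Real.rpow_pos_of_pos hK _))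
  have hεhalf : ε ≤ 2⁻¹ := min_le_left _ _
  have hε1 : ε < 1 := lt_of_le_of_lt hεhalf (by norm_num)
  have hεβK : ε ^ β < K := by
    have h1 : ε < K ^ β⁻¹ := lt_of_le_of_lt (min_le_right _ _) (by
      have := Real.rpow_pos_of_pos hK β⁻¹; linarith)
    calc ε ^ β < (K ^ β⁻¹) ^ β := Real.rpow_lt_rpow hε0.le h1 hβ
      _ = K := by rw [← Real.rpow_mul hK.le, inv_mul_cancel₀ hβ.ne', Real.rpow_one]
  set r : ℝ := 1 - ε with hrdef
  have hr0 : 0 ≤ r := by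
    rw [hrdef]
    have h2i : (2:ℝ)⁻¹ < 1 := by norm_num
    linarith
  have hr1 : r < 1 := by rw [hrdef]; linarith
  have hrε : 1 - r = ε := by rw [hrdef]; ring
  have hs0 : (0:ℝ) ≤ r ^ 2 := by positivity
  have hs1 : r ^ 2 < 1 := pow_lt_one₀ hr0 hr1 two_ne_zero
  set A2 : ℝ := geoZ (r ^ 2) with hA2def
  have hA2one : 1 ≤ A2 := one_le_geoZ hs0 hs1
  have hA2pos : 0 < A2 := by linarith
  have h1s : ε ≤ 1 - r ^ 2 := by
    have hq : (1 - r ^ 2) - (1 - r) = (1 - r) * r := by ring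
    have hq2 : 0 ≤ (1 - r) * r := mul_nonneg (by linarith only [hr1]) hr0
    linarith only [hrε, hq, hq2]
  have h1spos : 0 < 1 - r ^ 2 := by linarith
  have hA2le : A2 ≤ 2 / ε := by
    have h2 := geoZ_le hs0 hs1
    have h3 : (1 - r ^ 2)⁻¹ ≤ ε⁻¹ := inv_anti₀ hε0 h1s
    rw [div_eq_mul_inv]
    calc A2 ≤ 2 * (1 - r ^ 2)⁻¹ := h2
      _ ≤ 2 * ε⁻¹ := by linarith
  have hA2invle : A2⁻¹ ≤ 1 - r ^ 2 := by
    have h2 := le_geoZ hs0 hs1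
    have := inv_anti₀ (inv_pos.mpr h1spos) h2
    rwa [inv_inv] at this
  set c : ℝ := Real.sqrt (lam / A2 ^ d) with hcdef
  have hc0 : 0 ≤ c := Real.sqrt_nonneg _
  have hc2 : c ^ 2 = lam / A2 ^ d := Real.sq_sqrt (by positivity)
  have hmass := mass_hasSum d hr0 hr1 hc0
  rw [← hA2def] at hmass
  have hmassval : c ^ 2 * A2 ^ d = lam := by
    rw [hc2]
    exact div_mul_cancel₀ _ (ne_of_gt (by positivity : (0:ℝ) < A2 ^ d))
  set B : ℝ := geoZ (r ^ (2 * σ + 2)) with hBdef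
  have hNL := nl_hasSum d (2 * σ + 2) hr0 hr1 hc0 (by linarith)
  rw [← hBdef] at hNL
  have hedge := edgeSum_testFun d hr0 hr1 hc0
  rw [← hA2def] at hedge
  -- BddBelow
  have hbdd : BddBelow {x : ℝ | ∃ u : (Fin d → ℤ) → ℂ, Summable (fun n => ‖u n‖ ^ 2) ∧
      (∑' n : Fin d → ℤ, ‖u n‖ ^ 2) = lam ∧ x = dnlsH d σ u} := by
    refine ⟨-((1 / (σ + 1)) * lam ^ (σ + 1)), ?_⟩
    rintro x ⟨v, hv1, hv2, rfl⟩
    have hedge0 : 0 ≤ edgeSum d v :=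
      tsum_nonneg (fun n => Finset.sum_nonneg fun i _ => by positivity)
    have hterm : ∀ n, ‖v n‖ ^ (2 * σ + 2) ≤ lam ^ σ * ‖v n‖ ^ 2 := by
      intro n
      have hx : (0:ℝ) ≤ ‖v n‖ := norm_nonneg _
      have hx2 : ‖v n‖ ^ 2 ≤ lam := hv2 ▸ Summable.le_tsum hv1 n (fun m _ => by positivity)
      have hrw : ‖v n‖ ^ (2 * σ + 2) = (‖v n‖ ^ 2) ^ σ * ‖v n‖ ^ 2 := by
        rw [← Real.rpow_natCast (‖v n‖) 2, ← Real.rpow_mul hx,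
          ← Real.rpow_add' hx (ne_of_gt (by push_cast; linarith))]
        norm_num
      rw [hrw]
      exact mul_le_mul_of_nonneg_right
        (Real.rpow_le_rpow (by positivity) hx2 hσ0.le) (by positivity)
    have hsum2 : Summable (fun n => lam ^ σ * ‖v n‖ ^ 2) := hv1.mul_left _
    have hsumNL : Summable (fun n : Fin d → ℤ => ‖v n‖ ^ (2 * σ + 2)) :=
      Summable.of_nonneg_of_le (fun n => Real.rpow_nonneg (norm_nonneg _) _) hterm hsum2
    have hNLle : (∑' n : Fin d → ℤ, ‖v n‖ ^ (2 * σ + 2)) ≤ lam ^ (σ + 1) := by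
      calc (∑' n : Fin d → ℤ, ‖v n‖ ^ (2 * σ + 2)) ≤ ∑' n : Fin d → ℤ, lam ^ σ * ‖v n‖ ^ 2 :=
            Summable.tsum_le_tsum hterm hsumNL hsum2
        _ = lam ^ σ * lam := by rw [tsum_mul_left, hv2]
        _ = lam ^ (σ + 1) := (Real.rpow_add_one hlam.ne' σ).symm
    have hmul : (1 / (σ + 1)) * (∑' n : Fin d → ℤ, ‖v n‖ ^ (2 * σ + 2))
        ≤ (1 / (σ + 1)) * lam ^ (σ + 1) :=
      mul_le_mul_of_nonneg_left hNLle (by positivity)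
    rw [dnlsH]
    linarith only [hedge0, hmul]
  have hmem : dnlsH d σ (testFun d r c) ∈ {x : ℝ | ∃ u : (Fin d → ℤ) → ℂ,
      Summable (fun n => ‖u n‖ ^ 2) ∧ (∑' n : Fin d → ℤ, ‖u n‖ ^ 2) = lam ∧ x = dnlsH d σ u} :=
    ⟨testFun d r c, hmass.summable, by rw [hmass.tsum_eq]; exact hmassval, rfl⟩
  rw [hInf]
  refine lt_of_le_of_lt (csInf_le hbdd hmem) ?_
  -- now show dnlsH d σ (testFun d r c) < 0
  rw [dnlsH, hedge, hNL.tsum_eq]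
  -- kinetic upper bound
  have hdsplit : A2 ^ (d - 1) * A2 = A2 ^ d := by
    rw [← pow_succ]; congr 1; omega
  have h5 : c ^ 2 * A2 ^ (d - 1) = lam * A2⁻¹ := by
    have h6 : c ^ 2 * A2 ^ (d - 1) * A2 = lam := by
      rw [mul_assoc, hdsplit]; exact hmassval
    calc c ^ 2 * A2 ^ (d - 1) = c ^ 2 * A2 ^ (d - 1) * (A2 * A2⁻¹) := by
          rw [mul_inv_cancel₀ hA2pos.ne', mul_one]
      _ = (c ^ 2 * A2 ^ (d - 1) * A2) * A2⁻¹ := by ring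
      _ = lam * A2⁻¹ := by rw [h6]
  have hkvnn : 0 ≤ kinV r := by
    rw [kinV]; positivity
  have hkv : kinV r * A2⁻¹ ≤ 2 * ε ^ 2 := by
    have h7 : kinV r * (1 - r ^ 2) = 2 * ε ^ 2 := by
      rw [kinV, ← hrε]
      field_simp
      ring
    calc kinV r * A2⁻¹ ≤ kinV r * (1 - r ^ 2) := mul_le_mul_of_nonneg_left hA2invle hkvnn
      _ = 2 * ε ^ 2 := h7
  have hkin : (d:ℝ) * (2 * (c ^ 2 * (kinV r * A2 ^ (d - 1))))
      ≤ 4 * (d:ℝ) * lam * ε ^ 2 := by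
    have h8 : c ^ 2 * (kinV r * A2 ^ (d - 1)) = lam * (kinV r * A2⁻¹) := by
      rw [show c ^ 2 * (kinV r * A2 ^ (d - 1)) = kinV r * (c ^ 2 * A2 ^ (d - 1)) by ring, h5]
      ring
    rw [h8]
    have h9 : lam * (kinV r * A2⁻¹) ≤ lam * (2 * ε ^ 2) := mul_le_mul_of_nonneg_left hkv hlam.le
    calc (d:ℝ) * (2 * (lam * (kinV r * A2⁻¹))) ≤ (d:ℝ) * (2 * (lam * (2 * ε ^ 2))) := by
          apply mul_le_mul_of_nonneg_left _ (by positivity)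
          linarith
      _ = 4 * (d:ℝ) * lam * ε ^ 2 := by ring
  -- nonlinear lower bound
  have hp1 : (1:ℝ) ≤ 2 * σ + 2 := by linarith
  have ht1 : r ^ (2 * σ + 2) < 1 := Real.rpow_lt_one hr0 hr1 (by linarith)
  have htpos : 0 < 1 - r ^ (2 * σ + 2) := by linarith
  have hbern : 1 - r ^ (2 * σ + 2) ≤ (2 * σ + 2) * ε := by
    have h9 := one_add_mul_self_le_rpow_one_add (s := r - 1)
      (by linarith only [hr0] : (-1:ℝ) ≤ r - 1) hp1
    rw [show (1 + (r - 1) : ℝ) = r by ring] at h9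
    have h9' : 1 - r ^ (2 * σ + 2) ≤ (2 * σ + 2) * (1 - r) := by linarith only [h9]
    rw [← hrε]
    exact h9'
  have hBlow : ((2 * σ + 2) * ε)⁻¹ ≤ B := by
    have h11 : (1 - r ^ (2 * σ + 2))⁻¹ ≤ B := le_geoZ (Real.rpow_nonneg hr0 _) ht1
    have h12 : ((2 * σ + 2) * ε)⁻¹ ≤ (1 - r ^ (2 * σ + 2))⁻¹ :=
      inv_anti₀ htpos hbern
    linarith
  have hclow : lam * (ε / 2) ^ d ≤ c ^ 2 := by
    rw [hc2]
    have h13 : A2 ^ d ≤ (2 / ε) ^ d := pow_le_pow_left₀ hA2pos.le hA2le d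
    have h14 : lam / (2 / ε) ^ d ≤ lam / A2 ^ d :=
      div_le_div_of_nonneg_left hlam.le (by positivity) h13
    have h15 : lam / (2 / ε) ^ d = lam * (ε / 2) ^ d := by
      rw [div_eq_mul_inv, ← inv_pow, inv_div]
    linarith
  have hcrpow : c ^ (2 * σ + 2) = (c ^ 2 : ℝ) ^ (σ + 1) := by
    rw [← Real.rpow_natCast c 2, ← Real.rpow_mul hc0]
    congr 1
    push_cast
    ring
  have hcp : (lam * (ε / 2) ^ d) ^ (σ + 1) ≤ c ^ (2 * σ + 2) := by
    rw [hcrpow]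
    exact Real.rpow_le_rpow (by positivity) hclow (by linarith)
  have hBd : (((2 * σ + 2) * ε) ^ d)⁻¹ ≤ B ^ d := by
    rw [← inv_pow]
    exact pow_le_pow_left₀ (by positivity) hBlow d
  have hBnn : (0:ℝ) ≤ B ^ d := le_trans (by positivity) hBd
  have hNLge : (1 / (σ + 1)) * ((lam * (ε / 2) ^ d) ^ (σ + 1) * (((2 * σ + 2) * ε) ^ d)⁻¹)
      ≤ (1 / (σ + 1)) * (c ^ (2 * σ + 2) * B ^ d) := by
    apply mul_le_mul_of_nonneg_left _ (by positivity)
    exact mul_le_mul hcp hBd (by positivity) (Real.rpow_nonneg hc0 _)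
  -- identify the lower bound with C * ε ^ (d σ)
  have hεd_ne : (ε : ℝ) ^ (d:ℝ) ≠ 0 := (Real.rpow_pos_of_pos hε0 _).ne'
  have hN0 : (1 / (σ + 1)) * ((lam * (ε / 2) ^ d) ^ (σ + 1) * (((2 * σ + 2) * ε) ^ d)⁻¹)
      = C * ε ^ ((d:ℝ) * σ) := by
    rw [Real.mul_rpow hlam.le (by positivity), div_pow ε 2 d,
      Real.div_rpow (by positivity) (by positivity), mul_pow]
    have he1 : ((ε ^ d : ℝ)) ^ (σ + 1) = ε ^ ((d:ℝ) * (σ + 1)) := by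
      rw [← Real.rpow_natCast ε d, ← Real.rpow_mul hε0.le]
    have he2 : (ε ^ d : ℝ) = ε ^ (d:ℝ) := (Real.rpow_natCast ε d).symm
    have he3 : ε ^ ((d:ℝ) * (σ + 1)) = ε ^ ((d:ℝ) * σ) * ε ^ (d:ℝ) := by
      rw [← Real.rpow_add hε0]; ring_nf
    rw [he1, he2, he3, hCdef]
    have hne1 : ((2:ℝ) ^ d) ^ (σ + 1) ≠ 0 := (Real.rpow_pos_of_pos (by positivity) _).ne'
    have hne2 : ((2 * σ + 2) : ℝ) ^ d ≠ 0 := by positivity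
    field_simp [hne1, hne2, hεd_ne, hσ1.ne']
  have h2eq : (ε : ℝ) ^ 2 = ε ^ β * ε ^ ((d:ℝ) * σ) := by
    have : (ε : ℝ) ^ 2 = ε ^ ((2:ℝ)) := by
      rw [← Real.rpow_natCast ε 2]; norm_num
    rw [this, show (2:ℝ) = β + (d:ℝ) * σ by rw [hβdef]; ring, Real.rpow_add hε0]
  have hfinal : 4 * (d:ℝ) * lam * ε ^ 2 < C * ε ^ ((d:ℝ) * σ) := by
    have hεσ : (0:ℝ) < ε ^ ((d:ℝ) * σ) := Real.rpow_pos_of_pos hε0 _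
    have hKC : K * (4 * (d:ℝ) * lam) = C := by
      rw [hKdef]; field_simp
    have h16 : 4 * (d:ℝ) * lam * ε ^ β < 4 * (d:ℝ) * lam * K :=
      mul_lt_mul_of_pos_left hεβK (by positivity)
    calc 4 * (d:ℝ) * lam * ε ^ 2 = (4 * (d:ℝ) * lam * ε ^ β) * ε ^ ((d:ℝ) * σ) := by
          rw [h2eq]; ring
      _ < (4 * (d:ℝ) * lam * K) * ε ^ ((d:ℝ) * σ) := mul_lt_mul_of_pos_right h16 hεσ
      _ = C * ε ^ ((d:ℝ) * σ) := by rw [show 4 * (d:ℝ) * lam * K = K * (4 * (d:ℝ) * lam) by ring, hKC]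
  linarith only [hkin, hNLge, hN0, hfinal]
end

section
/- Let d ≥ 1 and 0 < σ < 2/d. The function h(λ) = inf{H[u] : ‖u‖_{l²}² = λ} is concave on (0,∞): for all λ₁, λ₂ > 0 and a ∈ (0,1), h(aλ₁ + (1-a)λ₂) ≥ a h(λ₁) + (1-a) h(λ₂). -/
lemma edgeSum_nonneg (d : ℕ) (u : (Fin d → ℤ) → ℂ) : 0 ≤ edgeSum d u :=
  tsum_nonneg fun n => Finset.sum_nonneg fun i _ => by positivity

lemma edgeSum_smul (d : ℕ) (c : ℝ) (u : (Fin d → ℤ) → ℂ) :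
    edgeSum d (fun n => (c:ℂ) * u n) = c^2 * edgeSum d u := by
  unfold edgeSum
  rw [← tsum_mul_left]
  congr 1; funext n
  rw [Finset.mul_sum]
  refine Finset.sum_congr rfl fun i _ => ?_
  rw [← mul_sub, ← mul_sub, norm_mul, norm_mul, Complex.norm_real, mul_pow, mul_pow,
    Real.norm_eq_abs, sq_abs, mul_add]

lemma l2_smul (d : ℕ) (c : ℝ) (u : (Fin d → ℤ) → ℂ) :
    (fun n : Fin d → ℤ => ‖(c:ℂ) * u n‖ ^ 2) = fun n => c^2 * ‖u n‖^2 := by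
  funext n
  rw [norm_mul, Complex.norm_real, mul_pow, Real.norm_eq_abs, sq_abs]

lemma p_smul (d : ℕ) (σ : ℝ) (c : ℝ) (hc : 0 ≤ c) (u : (Fin d → ℤ) → ℂ) :
    (∑' n : Fin d → ℤ, ‖(c:ℂ) * u n‖ ^ (2*σ+2)) =
      (c^2) ^ (σ+1) * ∑' n : Fin d → ℤ, ‖u n‖ ^ (2*σ+2) := by
  rw [← tsum_mul_left]
  congr 1; funext n
  rw [norm_mul, Complex.norm_real, Real.norm_eq_abs, abs_of_nonneg hc,
    Real.mul_rpow hc (norm_nonneg _)]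
  congr 1
  rw [← Real.rpow_natCast c 2, ← Real.rpow_mul hc]
  ring_nf

lemma dnlsH_smul (d : ℕ) (σ : ℝ) (c : ℝ) (hc : 0 ≤ c) (u : (Fin d → ℤ) → ℂ) :
    dnlsH d σ (fun n => (c:ℂ) * u n) =
      c^2 * edgeSum d u - (c^2)^(σ+1) * ((1 / (σ + 1)) * ∑' n : Fin d → ℤ, ‖u n‖ ^ (2*σ+2)) := by
  unfold dnlsH
  rw [edgeSum_smul, p_smul d σ c hc]
  ring

lemma p_le (d : ℕ) (σ : ℝ) (hσ0 : 0 < σ) (u : (Fin d → ℤ) → ℂ)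
    (hs : Summable (fun n : Fin d → ℤ => ‖u n‖ ^ 2)) (lam : ℝ) (hlam : 0 < lam)
    (hn : (∑' n : Fin d → ℤ, ‖u n‖ ^ 2) = lam) :
    (∑' n : Fin d → ℤ, ‖u n‖ ^ (2*σ+2)) ≤ lam ^ (σ+1) := by
  have hle : ∀ n, ‖u n‖ ^ 2 ≤ lam := by
    intro n
    rw [← hn]
    exact Summable.le_tsum hs n fun m _ => by positivity
  have hpt : ∀ n : Fin d → ℤ, ‖u n‖ ^ (2*σ+2) ≤ lam ^ σ * ‖u n‖ ^ 2 := by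
    intro n
    have h1 : ‖u n‖ ^ (2*σ+2) = (‖u n‖^2) ^ σ * ‖u n‖ ^ 2 := by
      rw [← Real.rpow_natCast (‖u n‖) 2, ← Real.rpow_mul (norm_nonneg _)]
      rw [← Real.rpow_add' (norm_nonneg _) (by push_cast; linarith)]
      norm_num [mul_comm]
    rw [h1]
    exact mul_le_mul_of_nonneg_right
      (Real.rpow_le_rpow (by positivity) (hle n) hσ0.le) (by positivity)
  have hsum2 : Summable (fun n : Fin d → ℤ => ‖u n‖ ^ (2*σ+2)) :=
    Summable.of_nonneg_of_le (fun n => by positivity) hpt (hs.mul_left _)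
  calc (∑' n : Fin d → ℤ, ‖u n‖ ^ (2*σ+2))
      ≤ ∑' n : Fin d → ℤ, lam ^ σ * ‖u n‖ ^ 2 := Summable.tsum_le_tsum hpt hsum2 (hs.mul_left _)
    _ = lam ^ σ * lam := by rw [tsum_mul_left, hn]
    _ = lam ^ (σ+1) := by
        rw [Real.rpow_add hlam, Real.rpow_one]

lemma bddBelow_S (d : ℕ) (σ : ℝ) (hσ0 : 0 < σ) (lam : ℝ) (hlam : 0 < lam) :
    BddBelow {x : ℝ | ∃ u : (Fin d → ℤ) → ℂ, Summable (fun n => ‖u n‖ ^ 2) ∧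
      (∑' n : Fin d → ℤ, ‖u n‖ ^ 2) = lam ∧ x = dnlsH d σ u} := by
  refine ⟨-((1/(σ+1)) * lam ^ (σ+1)), ?_⟩
  rintro x ⟨u, hs, hn, rfl⟩
  unfold dnlsH
  have hE := edgeSum_nonneg d u
  have hP := p_le d σ hσ0 u hs lam hlam hn
  have hσ1 : (0:ℝ) < 1/(σ+1) := by positivity
  nlinarith [mul_le_mul_of_nonneg_left hP hσ1.le]

/-- for `d ≥ 1`, `0 < σ < 2/d`, the function `h` is concave on `(0,∞)`:
`h(aλ₁ + (1-a)λ₂) ≥ a h(λ₁) + (1-a) h(λ₂)`. -/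
theorem hInf_concave (d : ℕ) (hd : 1 ≤ d) (σ : ℝ) (hσ0 : 0 < σ) (hσ : σ < 2 / d)
    (lam₁ lam₂ : ℝ) (h₁ : 0 < lam₁) (h₂ : 0 < lam₂) (a : ℝ) (ha : a ∈ Set.Ioo (0:ℝ) 1) :
    a * hInf d σ lam₁ + (1 - a) * hInf d σ lam₂ ≤
      hInf d σ (a * lam₁ + (1 - a) * lam₂) := by
  obtain ⟨ha0, ha1⟩ := ha
  set lam := a * lam₁ + (1 - a) * lam₂ with hlamdef
  have hlam : 0 < lam := by nlinarith
  have hne : {x : ℝ | ∃ u : (Fin d → ℤ) → ℂ, Summable (fun n => ‖u n‖ ^ 2) ∧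
      (∑' n : Fin d → ℤ, ‖u n‖ ^ 2) = lam ∧ x = dnlsH d σ u}.Nonempty := by
    refine ⟨dnlsH d σ (fun n => if n = 0 then ((Real.sqrt lam : ℝ) : ℂ) else 0),
      (fun n => if n = 0 then ((Real.sqrt lam : ℝ) : ℂ) else 0), ?_, ?_, rfl⟩
    · have : (fun n : Fin d → ℤ => ‖(if n = 0 then ((Real.sqrt lam : ℝ) : ℂ) else 0)‖ ^ 2)
          = fun n => if n = 0 then lam else 0 := by
        funext n
        split_ifs with h
        · simp [Complex.norm_real, Real.norm_eq_abs, abs_of_nonneg (Real.sqrt_nonneg lam),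
            Real.sq_sqrt hlam.le]
        · simp
      rw [this]
      exact summable_of_ne_finset_zero (s := {0}) (by intro n hn; simp at hn; simp [hn])
    · have : (fun n : Fin d → ℤ => ‖(if n = 0 then ((Real.sqrt lam : ℝ) : ℂ) else 0)‖ ^ 2)
          = fun n => if n = 0 then lam else 0 := by
        funext n
        split_ifs with h
        · simp [Complex.norm_real, Real.norm_eq_abs, abs_of_nonneg (Real.sqrt_nonneg lam),
            Real.sq_sqrt hlam.le]
        · simp
      rw [this, tsum_ite_eq]
  have main : ∀ x ∈ {x : ℝ | ∃ u : (Fin d → ℤ) → ℂ, Summable (fun n => ‖u n‖ ^ 2) ∧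
      (∑' n : Fin d → ℤ, ‖u n‖ ^ 2) = lam ∧ x = dnlsH d σ u},
      a * hInf d σ lam₁ + (1 - a) * hInf d σ lam₂ ≤ x := by
    rintro x ⟨u, hs, hn, rfl⟩
    set t₁ := lam₁ / lam with ht₁def
    set t₂ := lam₂ / lam with ht₂def
    have ht₁ : 0 ≤ t₁ := by positivity
    have ht₂ : 0 ≤ t₂ := by positivity
    have hsum1 : a * t₁ + (1 - a) * t₂ = 1 := by
      rw [ht₁def, ht₂def, mul_div_assoc', mul_div_assoc', ← add_div,
        div_eq_one_iff_eq hlam.ne']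
    set E := edgeSum d u with hEdef
    set P := ∑' n : Fin d → ℤ, ‖u n‖ ^ (2*σ+2) with hPdef
    set Q := (1/(σ+1)) * P with hQdef
    have hQ : 0 ≤ Q := by
      have hP : 0 ≤ P := tsum_nonneg fun n => by positivity
      positivity
    have key : ∀ t : ℝ, 0 < t →
        hInf d σ (t * lam) ≤ t * E - t ^ (σ+1) * Q := by
      intro t ht
      have hc : (0:ℝ) ≤ Real.sqrt t := Real.sqrt_nonneg t
      have hc2 : Real.sqrt t ^ 2 = t := Real.sq_sqrt ht.le
      have hmem : dnlsH d σ (fun n => ((Real.sqrt t : ℝ) : ℂ) * u n) ∈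
          {x : ℝ | ∃ u : (Fin d → ℤ) → ℂ, Summable (fun n => ‖u n‖ ^ 2) ∧
            (∑' n : Fin d → ℤ, ‖u n‖ ^ 2) = t * lam ∧ x = dnlsH d σ u} := by
        refine ⟨_, ?_, ?_, rfl⟩
        · rw [l2_smul]
          exact hs.mul_left _
        · rw [l2_smul, tsum_mul_left, hn, hc2]
      have := csInf_le (bddBelow_S d σ hσ0 (t * lam) (by positivity)) hmem
      rw [dnlsH_smul d σ _ hc u, hc2] at this
      exact this
    have k₁ := key t₁ (by positivity)
    have k₂ := key t₂ (by positivity)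
    have e₁ : t₁ * lam = lam₁ := by rw [ht₁def]; exact div_mul_cancel₀ lam₁ hlam.ne'
    have e₂ : t₂ * lam = lam₂ := by rw [ht₂def]; exact div_mul_cancel₀ lam₂ hlam.ne'
    rw [e₁] at k₁
    rw [e₂] at k₂
    have hconv : (1:ℝ) ≤ a * t₁ ^ (σ+1) + (1 - a) * t₂ ^ (σ+1) := by
      have hcvx := (convexOn_rpow (p := σ+1) (by linarith)).2
        (Set.mem_Ici.mpr ht₁) (Set.mem_Ici.mpr ht₂) ha0.le (by linarith : (0:ℝ) ≤ 1 - a) (by ring)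
      simpa [hsum1, Real.one_rpow] using hcvx
    have hHu : dnlsH d σ u = E - Q := by
      unfold dnlsH
      rfl
    have hmul : (1:ℝ) * Q ≤ (a * t₁ ^ (σ+1) + (1 - a) * t₂ ^ (σ+1)) * Q :=
      mul_le_mul_of_nonneg_right hconv hQ
    have big : a * (t₁ * E - t₁ ^ (σ+1) * Q) + (1 - a) * (t₂ * E - t₂ ^ (σ+1) * Q)
        ≤ E - Q := by
      have hEeq : a * t₁ * E + (1 - a) * t₂ * E = E := by
        calc a * t₁ * E + (1 - a) * t₂ * E = (a * t₁ + (1 - a) * t₂) * E := by ring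
          _ = E := by rw [hsum1, one_mul]
      have hexp : a * (t₁ * E - t₁ ^ (σ+1) * Q) + (1 - a) * (t₂ * E - t₂ ^ (σ+1) * Q)
          = (a * t₁ * E + (1 - a) * t₂ * E)
            - (a * t₁ ^ (σ+1) + (1 - a) * t₂ ^ (σ+1)) * Q := by ring
      rw [hexp, hEeq]
      linarith
    calc a * hInf d σ lam₁ + (1 - a) * hInf d σ lam₂
        ≤ a * (t₁ * E - t₁ ^ (σ+1) * Q) + (1 - a) * (t₂ * E - t₂ ^ (σ+1) * Q) :=
          add_le_add (mul_le_mul_of_nonneg_left k₁ ha0.le)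
            (mul_le_mul_of_nonneg_left k₂ (by linarith))
      _ ≤ E - Q := big
      _ = dnlsH d σ u := hHu.symm
  exact le_csInf hne main
end
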